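/- The kernel of rho' : G_II -> S_5 is the normal closure in G_II of the three elements g1 g2 g4 g2, g2 g4 g1 g4, and (g2 g3 g4 g3)^2. -/

import Mathlib

/-!
Modulo the normal closure `N`, the relators `g1 g2 g4 g2` and `g2 g4 g1 g4` give
`g2 = g1 g4 g1 = g4 g1 g4`, so `G_II ⧸ N` is generated by the chain `g1, g4, g3, g5`, which
satisfies the Coxeter relations of type `A₄`. In a group generated by involutions `s₀, …, sₖ`
with these relations, the products `sⱼ sⱼ₊₁ ⋯ sₖ` (`0 ≤ j ≤ k + 1`) represent all left cosets
of `⟨s₀, …, sₖ₋₁⟩`, so the group has at most `(k + 2)!` elements. Hence `G_II ⧸ N` has at most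
`5! = |S₅|` elements, and the map `G_II ⧸ N → S₅` induced by the surjection `ρ'` is injective.
-/

namespace Stmt8

/-- Generators: `i ↦ g(i+1)` for `i = 0,…,4`. -/
def g (i : Fin 5) : FreeGroup (Fin 5) := FreeGroup.of i

/-- The braid relator `x y x (y x y)⁻¹`, i.e. `<x,y> = e`. -/
def braid (x y : FreeGroup (Fin 5)) : FreeGroup (Fin 5) := x * y * x * (y * x * y)⁻¹

/-- The commutator relator `x y x⁻¹ y⁻¹`, i.e. `[x,y] = e`. -/
def comm (x y : FreeGroup (Fin 5)) : FreeGroup (Fin 5) := x * y * x⁻¹ * y⁻¹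

/-- Relators of the group `G_II` from Theorem 3.5 (union of the Cayley cubic degeneration
and two planes, Type II). -/
def rels : Set (FreeGroup (Fin 5)) :=
  { (g 0) ^ 2, (g 1) ^ 2, (g 2) ^ 2, (g 3) ^ 2, (g 4) ^ 2,
    comm (g 0) (g 2), comm (g 0) (g 4), comm (g 1) (g 4),
    comm (g 0) (g 1 * g 3 * g 1), comm (g 3) (g 4),
    braid (g 0) (g 1), braid (g 1) (g 2), braid (g 1) (g 3),
    braid (g 2) (g 3), braid (g 2) (g 4) }

/-- The presented group `G_II`. -/
abbrev GII := PresentedGroup rels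

end Stmt8

open Finset Nat
open scoped Pointwise

section CoxeterA

variable {G : Type*} [Group G]

theorem closure_subset_mul_of_forall_mul_mem {S R : Set G} {K : Subgroup G}
    (hS : ∀ x ∈ S, x⁻¹ ∈ S) (hR : (1 : G) ∈ R)
    (hmul : ∀ x ∈ S, ∀ r ∈ R, x * r ∈ R * (K : Set G)) :
    (Subgroup.closure S : Set G) ⊆ R * K := by
  have mul_mem : ∀ x ∈ S, ∀ y ∈ R * (K : Set G), x * y ∈ R * (K : Set G) := by
    rintro x hx _ ⟨r, hr, k, hk, rfl⟩
    obtain ⟨r', hr', k', hk', he⟩ := hmul x hx r hr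
    refine ⟨r', hr', k' * k, K.mul_mem hk' hk, ?_⟩
    simp only at he ⊢
    rw [← mul_assoc, he, mul_assoc]
  intro y hy
  induction hy using Subgroup.closure_induction_left with
  | one => exact ⟨1, hR, 1, K.one_mem, mul_one 1⟩
  | mul_left x hx y _ ih => exact mul_mem x hx y ih
  | inv_mul_cancel x hx y _ ih => exact mul_mem x⁻¹ (hS x hx) y ih

/-- Only the generators `s 0, …, s (n - 1)` are constrained. -/
structure IsCoxeterA (n : ℕ) (s : ℕ → G) : Prop where
  mul_self : ∀ i < n, s i * s i = 1
  braid : ∀ i, i + 1 < n → s i * s (i + 1) * s i = s (i + 1) * s i * s (i + 1)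
  commute : ∀ i j, i + 2 ≤ j → j < n → Commute (s i) (s j)

def ascProd (s : ℕ → G) (j l : ℕ) : G := ((List.range' j l).map s).prod

@[simp]
lemma ascProd_zero (s : ℕ → G) (j : ℕ) : ascProd s j 0 = 1 := rfl

lemma ascProd_succ (s : ℕ → G) (j l : ℕ) :
    ascProd s j (l + 1) = s j * ascProd s (j + 1) l := by
  simp [ascProd, List.range'_succ]

def cosetReps [DecidableEq G] (s : ℕ → G) (k : ℕ) : Finset G :=
  (range (k + 2)).image fun j => ascProd s j (k + 1 - j)

def normalForms [DecidableEq G] (s : ℕ → G) : ℕ → Finset G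
  | 0 => {1}
  | k + 1 => cosetReps s k * normalForms s k

lemma card_normalForms_le [DecidableEq G] (s : ℕ → G) (k : ℕ) :
    #(normalForms s k) ≤ (k + 1)! := by
  induction k with
  | zero => simp [normalForms]
  | succ k ih =>
    calc #(normalForms s (k + 1)) ≤ #(cosetReps s k) * #(normalForms s k) := card_mul_le
      _ ≤ (k + 2) * (k + 1)! := Nat.mul_le_mul (card_image_le.trans (card_range _).le) ih
      _ = (k + 2)! := (Nat.factorial_succ (k + 1)).symm

namespace IsCoxeterA

variable {n : ℕ} {s : ℕ → G}

lemma commute_ascProd (h : IsCoxeterA n s) {i j l : ℕ} (hij : i + 2 ≤ j) (hl : j + l ≤ n) :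
    Commute (s i) (ascProd s j l) :=
  Commute.list_prod_right _ _ fun x hx => by
    obtain ⟨m, hm, rfl⟩ := List.mem_map.1 hx
    rw [List.mem_range'_1] at hm
    exact h.commute i m (by omega) (by omega)

lemma mul_ascProd_of_lt (h : IsCoxeterA n s) {i j l : ℕ} (hji : j < i) (hil : i < j + l)
    (hl : j + l ≤ n) : s i * ascProd s j l = ascProd s j l * s (i - 1) := by
  induction l generalizing j with
  | zero => omega
  | succ l ih =>
    rw [ascProd_succ]
    obtain hlt | rfl : j + 1 < i ∨ i = j + 1 := by omega
    · rw [← mul_assoc, (h.commute j i (by omega) (by omega)).eq.symm, mul_assoc,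
        ih hlt (by omega) (by omega), mul_assoc]
    · obtain ⟨l, rfl⟩ : ∃ l', l = l' + 1 := ⟨l - 1, by omega⟩
      -- `s (j+1) s j s (j+1) = s j s (j+1) s j`, then `s j` moves right past `s (j+2) ⋯`
      rw [ascProd_succ, Nat.add_sub_cancel, ← mul_assoc, ← mul_assoc, ← mul_assoc,
        ← h.braid j (by omega), mul_assoc _ (s j),
        (h.commute_ascProd (i := j) (j := j + 1 + 1) le_rfl (by omega)).eq]
      simp only [mul_assoc]

lemma mul_mem_cosetReps_mul_closure [DecidableEq G] (h : IsCoxeterA n s) {i k : ℕ}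
    (hik : i ≤ k) (hk : k < n) {r : G} (hr : r ∈ cosetReps s k) :
    s i * r ∈ (cosetReps s k : Set G) * (Subgroup.closure (s '' Set.Iio k) : Set G) := by
  obtain ⟨j, hj, rfl⟩ := mem_image.1 hr
  rw [mem_range] at hj
  have rep_mul_mem : ∀ j' ≤ k + 1, ∀ x ∈ Subgroup.closure (s '' Set.Iio k),
      ascProd s j' (k + 1 - j') * x ∈
        (cosetReps s k : Set G) * (Subgroup.closure (s '' Set.Iio k) : Set G) :=
    fun j' hj' x hx => Set.mul_mem_mul (mem_image_of_mem _ (mem_range.2 (by omega))) hx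
  have gen_mem : ∀ m < k, s m ∈ Subgroup.closure (s '' Set.Iio k) :=
    fun m hm => Subgroup.subset_closure ⟨m, hm, rfl⟩
  obtain hlt | rfl | rfl | hgt : i + 2 ≤ j ∨ j = i + 1 ∨ j = i ∨ j < i := by omega
  · rw [(h.commute_ascProd hlt (by omega)).eq]
    exact rep_mul_mem j (by omega) _ (gen_mem i (by omega))
  · have : k + 1 - i = k + 1 - (i + 1) + 1 := by omega
    rw [← mul_one (s i * _), ← ascProd_succ, ← this]
    exact rep_mul_mem i (by omega) 1 (Subgroup.one_mem _)
  · have : k + 1 - j = k + 1 - (j + 1) + 1 := by omega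
    rw [this, ascProd_succ, ← mul_assoc, h.mul_self j (by omega), one_mul,
      ← mul_one (ascProd _ _ _)]
    exact rep_mul_mem (j + 1) (by omega) 1 (Subgroup.one_mem _)
  · rw [h.mul_ascProd_of_lt hgt (by omega) (by omega)]
    exact rep_mul_mem j (by omega) _ (gen_mem _ (by omega))

lemma closure_succ_subset [DecidableEq G] (h : IsCoxeterA n s) {k : ℕ} (hk : k < n) :
    (Subgroup.closure (s '' Set.Iio (k + 1)) : Set G) ⊆
      cosetReps s k * (Subgroup.closure (s '' Set.Iio k) : Set G) := by
  refine closure_subset_mul_of_forall_mul_mem ?_ ?_ ?_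
  · rintro _ ⟨i, hi, rfl⟩
    rw [inv_eq_of_mul_eq_one_right (h.mul_self i ((Set.mem_Iio.1 hi).trans_le hk))]
    exact ⟨i, hi, rfl⟩
  · exact mem_image.2 ⟨k + 1, mem_range.2 (by omega), by simp⟩
  · rintro _ ⟨i, hi, rfl⟩ r hr
    exact h.mul_mem_cosetReps_mul_closure (Nat.lt_succ_iff.1 hi) hk hr

lemma closure_subset_normalForms [DecidableEq G] (h : IsCoxeterA n s) {k : ℕ} (hk : k ≤ n) :
    (Subgroup.closure (s '' Set.Iio k) : Set G) ⊆ normalForms s k := by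
  induction k with
  | zero => simp [normalForms]
  | succ k ih =>
    refine (h.closure_succ_subset (by omega)).trans ?_
    rw [normalForms, coe_mul]
    exact Set.mul_subset_mul_left (ih (by omega))

theorem injective_of_card_le {H : Type*} [Group H] (h : IsCoxeterA n s)
    (hgen : Subgroup.closure (s '' Set.Iio n) = ⊤) {f : G →* H} (hf : Function.Surjective f)
    (hcard : (n + 1)! ≤ Nat.card H) : Function.Injective f := by
  classical
  have hmem (x : G) : x ∈ normalForms s n :=
    h.closure_subset_normalForms le_rfl (by simp [hgen])
  have hsurj : Function.Surjective fun x : normalForms s n => (x : G) :=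
    fun x => ⟨⟨x, hmem x⟩, rfl⟩
  have : Finite G := Finite.of_surjective _ hsurj
  refine (hf.bijective_of_nat_card_le ?_).injective
  calc Nat.card G ≤ Nat.card (normalForms s n) := Nat.card_le_card_of_surjective _ hsurj
    _ = #(normalForms s n) := Nat.card_eq_finsetCard _
    _ ≤ (n + 1)! := card_normalForms_le s n
    _ ≤ Nat.card H := hcard

end IsCoxeterA

end CoxeterA

lemma Equiv.Perm.surjective_of_forall_swap_mem_range {M : Type*} [Monoid M] {n : ℕ}
    (f : M →* Equiv.Perm (Fin (n + 1)))
    (h : ∀ i : Fin n, Equiv.swap i.castSucc i.succ ∈ Set.range f) : Function.Surjective f := by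
  rw [← MonoidHom.mrange_eq_top, eq_top_iff, ← Equiv.Perm.mclosure_swap_castSucc_succ n,
    Submonoid.closure_le]
  rintro _ ⟨i, rfl⟩
  exact h i

lemma mul_mul_eq_of_mul_eq_one {G : Type*} [Group G] {a b d : G} (hb : b * b = 1)
    (hd : d * d = 1) (h₁ : a * b * d * b = 1) (h₂ : b * d * a * d = 1) :
    a * d * a = b ∧ d * a * d = b := by
  have hdad : d * a * d = b := by
    rw [← inv_eq_of_mul_eq_one_right hb]
    exact eq_inv_of_mul_eq_one_right (by simpa only [mul_assoc] using h₂)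
  refine ⟨?_, hdad⟩
  calc a * d * a = a * (d * a * d) * d := by simp only [mul_assoc, hd, mul_one]
    _ = a * b * d * b * b := by rw [hdad, mul_assoc _ b b, hb, mul_one]
    _ = b := by rw [h₁, one_mul]

namespace Stmt8

open PresentedGroup

lemma mk_g (i : Fin 5) : PresentedGroup.mk rels (g i) = of i := rfl

lemma of_mul_self (i : Fin 5) : (of i : GII) * of i = 1 := by
  have hi : g i ^ 2 ∈ rels := by fin_cases i <;> simp [rels]
  simpa only [pow_two, map_mul, mk_g] using one_of_mem hi

lemma of_braid {i j : Fin 5} (hij : braid (g i) (g j) ∈ rels) :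
    (of i : GII) * of j * of i = of j * of i * of j :=
  mul_inv_eq_one.1 (by simpa only [braid, map_mul, map_inv, mk_g] using one_of_mem hij)

lemma of_commute {i j : Fin 5} (hij : comm (g i) (g j) ∈ rels) :
    Commute (of i : GII) (of j) := by
  have h := one_of_mem hij
  simp only [comm, map_mul, map_inv, mk_g] at h
  exact mul_inv_eq_one.1 (by rwa [mul_inv_rev, ← mul_assoc])

/-- The chain `g1, g4, g3, g5` (mapped to `(1 2), (2 3), (3 4), (4 5)` by `ρ'`), 0-indexed. -/
def chain : ℕ → Fin 5
  | 0 => 0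
  | 1 => 3
  | 2 => 2
  | _ => 4

section

variable {Q : Type*} [Group Q] {π : GII →* Q}

lemma map_of_one_eq (h₁ : π (of 0 * of 1 * of 3 * of 1) = 1)
    (h₂ : π (of 1 * of 3 * of 0 * of 3) = 1) :
    π (of 0) * π (of 3) * π (of 0) = π (of 1) ∧ π (of 3) * π (of 0) * π (of 3) = π (of 1) := by
  have map_of_mul_self (i : Fin 5) : π (of i) * π (of i) = 1 := by
    rw [← map_mul, of_mul_self, map_one]
  exact mul_mul_eq_of_mul_eq_one (map_of_mul_self 1) (map_of_mul_self 3)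
    (by simpa only [map_mul] using h₁) (by simpa only [map_mul] using h₂)

lemma isCoxeterA_chain (h₁ : π (of 0 * of 1 * of 3 * of 1) = 1)
    (h₂ : π (of 1 * of 3 * of 0 * of 3) = 1) : IsCoxeterA 4 fun i => π (of (chain i)) where
  mul_self i _ := by rw [← map_mul, of_mul_self, map_one]
  braid
    | 0, _ => (map_of_one_eq h₁ h₂).1.trans (map_of_one_eq h₁ h₂).2.symm
    | 1, _ => by
      simpa only [map_mul, chain] using
        congrArg π (of_braid (i := 2) (j := 3) (by simp [rels])).symm
    | 2, _ => by
      simpa only [map_mul, chain] using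
        congrArg π (of_braid (i := 2) (j := 4) (by simp [rels]))
    | _ + 3, _ => by omega
  commute i j hij hj := by
    have hi : i < 2 := by omega
    interval_cases j <;> interval_cases i <;>
      first | omega | exact (of_commute (by simp [rels, chain])).map π

lemma closure_chain_eq_range (h₁ : π (of 0 * of 1 * of 3 * of 1) = 1)
    (h₂ : π (of 1 * of 3 * of 0 * of 3) = 1) :
    Subgroup.closure ((fun i => π (of (chain i))) '' Set.Iio 4) = π.range := by
  rw [MonoidHom.range_eq_map, ← closure_range_of, MonoidHom.map_closure, ← Set.range_comp]
  refine le_antisymm (Subgroup.closure_mono ?_) ((Subgroup.closure_le _).2 ?_)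
  · rintro _ ⟨i, -, rfl⟩
    exact ⟨chain i, rfl⟩
  have mem (m : ℕ) (hm : m < 4) :
      π (of (chain m)) ∈ Subgroup.closure ((fun i => π (of (chain i))) '' Set.Iio 4) :=
    Subgroup.subset_closure ⟨m, hm, rfl⟩
  rintro _ ⟨i, rfl⟩
  fin_cases i
  · exact mem 0 (by norm_num)
  · change π (of 1) ∈ _
    rw [← (map_of_one_eq h₁ h₂).1]
    exact Subgroup.mul_mem _ (Subgroup.mul_mem _ (mem 0 (by norm_num)) (mem 1 (by norm_num)))
      (mem 0 (by norm_num))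
  · exact mem 2 (by norm_num)
  · exact mem 1 (by norm_num)
  · exact mem 3 (by norm_num)

end

theorem ker_eq_of_mem {N : Subgroup GII} [N.Normal] {ρ : GII →* Equiv.Perm (Fin 5)}
    (hρ : Function.Surjective ρ) (hN : N ≤ ρ.ker) (h₁ : of 0 * of 1 * of 3 * of 1 ∈ N)
    (h₂ : of 1 * of 3 * of 0 * of 3 ∈ N) : ρ.ker = N := by
  have hπ₁ := (QuotientGroup.eq_one_iff _).2 h₁
  have hπ₂ := (QuotientGroup.eq_one_iff _).2 h₂
  have hgen := (closure_chain_eq_range (π := QuotientGroup.mk' N) hπ₁ hπ₂).trans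
    (MonoidHom.range_eq_top.2 (QuotientGroup.mk'_surjective N))
  have hinj : Function.Injective (QuotientGroup.lift N ρ hN) :=
    (isCoxeterA_chain hπ₁ hπ₂).injective_of_card_le hgen (hρ.of_comp (g := QuotientGroup.mk))
      (by rw [Nat.card_perm, Nat.card_fin])
  refine le_antisymm (fun x hx => ?_) hN
  exact (QuotientGroup.eq_one_iff x).1 (hinj (by simpa using hx))

/-- Theorem 3.5 (kernel description): for the homomorphism `ρ' : G_II → S₅` determined by
`g1 ↦ (1 2)`, `g2 ↦ (1 3)`, `g3 ↦ (3 4)`, `g4 ↦ (2 3)`, `g5 ↦ (4 5)`, the kernel of `ρ'`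
is the normal closure of `g1 g2 g4 g2`, `g2 g4 g1 g4`, and `(g2 g3 g4 g3)²`. -/
theorem ker_eq_normalClosure (ρ' : GII →* Equiv.Perm (Fin 5))
    (h1 : ρ' (PresentedGroup.of 0) = Equiv.swap 0 1)
    (h2 : ρ' (PresentedGroup.of 1) = Equiv.swap 0 2)
    (h3 : ρ' (PresentedGroup.of 2) = Equiv.swap 2 3)
    (h4 : ρ' (PresentedGroup.of 3) = Equiv.swap 1 2)
    (h5 : ρ' (PresentedGroup.of 4) = Equiv.swap 3 4) :
    MonoidHom.ker ρ' = Subgroup.normalClosure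
      { (PresentedGroup.of 0 * PresentedGroup.of 1 * PresentedGroup.of 3
          * PresentedGroup.of 1 : GII),
        (PresentedGroup.of 1 * PresentedGroup.of 3 * PresentedGroup.of 0
          * PresentedGroup.of 3 : GII),
        (PresentedGroup.of 1 * PresentedGroup.of 2 * PresentedGroup.of 3
          * PresentedGroup.of 2 : GII) ^ 2 } := by
  have hρ : Function.Surjective ρ' :=
    Equiv.Perm.surjective_of_forall_swap_mem_range ρ' fun i => by
      fin_cases i
      exacts [⟨_, h1⟩, ⟨_, h4⟩, ⟨_, h3⟩, ⟨_, h5⟩]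
  refine ker_eq_of_mem hρ (Subgroup.normalClosure_le_normal ?_)
    (Subgroup.subset_normalClosure (by simp)) (Subgroup.subset_normalClosure (by simp))
  rintro _ (rfl | rfl | rfl) <;>
    simp only [SetLike.mem_coe, MonoidHom.mem_ker, map_pow, map_mul, h1, h2, h3, h4] <;> decide

end Stmt8
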